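/- Let X be a set, I : X → [0,∞], H̃ : X → ℝ, γ ≥ 0. Define s(u) = -inf{I(x) : H̃(x) = u}, s_γ(u) = s(u) - γu², E^u = {x : H̃(x) = u, I(x) = -s(u)}, and E_{β,γ} = {x : I(x) + βH̃(x) + γ[H̃(x)]² is minimized over X}. Fix u with s(u) > -∞ such that the infimum defining s(u) is attained. If s_γ has a strictly supporting line at u with slope β, then E^u = E_{β,γ}. -/

import Mathlib

open scoped ENNReal

/-!
Put `c = -s(u)`, which is finite since no strict supporting line passes through
`s_γ(u) = -∞`, and `T = c + βu + γu²`. Every `x` satisfies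
`I x + βH̃ x + γ(H̃ x)² ≥ T`: on the fiber `H̃ = u` because `I x ≥ c`, and off it strictly,
because `I x ≥ -s(H̃ x)` and the strict supporting line at `v = H̃ x` rearranges to
`-s(v) + βv + γv² > T`. The attaining point reaches `T`, so `T` is the minimum and the
minimizers are exactly the points of the fiber with `I x = c`.
-/

/-- The microcanonical entropy `s(u) = -inf{I(x) : H̃(x) = u}` (with `inf ∅ = +∞`). -/
noncomputable def microEnt {X : Type*} (I : X → ℝ≥0∞) (H : X → ℝ) (u : ℝ) : EReal :=
  -(⨅ x : {y : X // H y = u}, ((I x.1 : ℝ≥0∞) : EReal))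

noncomputable def gaussEnt {X : Type*} (I : X → ℝ≥0∞) (H : X → ℝ) (γ v : ℝ) : EReal :=
  microEnt I H v - ((γ * v ^ 2 : ℝ) : EReal)

def HasStrictSupportingLine (f : ℝ → EReal) (u β : ℝ) : Prop :=
  ∀ v : ℝ, v ≠ u → f v < f u + ((β * (v - u) : ℝ) : EReal)

lemma HasStrictSupportingLine.ne_bot {f : ℝ → EReal} {u β : ℝ}
    (h : HasStrictSupportingLine f u β) : f u ≠ ⊥ := fun hu => by
  simpa [hu] using h (u + 1) (by linarith)

section

variable {X : Type*} {I : X → ℝ≥0∞} {H : X → ℝ}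

lemma neg_microEnt_le (x : X) : -microEnt I H (H x) ≤ I x := by
  rw [microEnt, neg_neg]
  exact iInf_le (fun y : {y : X // H y = H x} => ((I y.1 : ℝ≥0∞) : EReal)) ⟨x, rfl⟩

variable {u β γ c : ℝ}

lemma lt_add_of_hasStrictSupportingLine (hc : -microEnt I H u = c)
    (hsupp : HasStrictSupportingLine (gaussEnt I H γ) u β) {x : X} (hx : H x ≠ u) :
    (c : EReal) + ((β * u + γ * u ^ 2 : ℝ) : EReal) <
      I x + ((β * H x + γ * H x ^ 2 : ℝ) : EReal) := by
  set v := H x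
  have hs : microEnt I H u = ((-c : ℝ) : EReal) := by rw [EReal.coe_neg, ← hc, neg_neg]
  have h := hsupp v hx
  rw [gaussEnt, gaussEnt, hs, ← EReal.coe_sub, ← EReal.coe_add,
    EReal.sub_lt_iff (.inl (EReal.coe_ne_bot _)) (.inl (EReal.coe_ne_top _)),
    ← EReal.coe_add] at h
  have hI : ((c + γ * u ^ 2 - β * (v - u) - γ * v ^ 2 : ℝ) : EReal) < I x :=
    calc ((c + γ * u ^ 2 - β * (v - u) - γ * v ^ 2 : ℝ) : EReal)
        = -((-c - γ * u ^ 2 + β * (v - u) + γ * v ^ 2 : ℝ) : EReal) := by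
          rw [← EReal.coe_neg]; ring_nf
      _ < -microEnt I H v := EReal.neg_lt_neg_iff.2 h
      _ ≤ I x := neg_microEnt_le x
  calc (c : EReal) + ((β * u + γ * u ^ 2 : ℝ) : EReal)
      = ((c + γ * u ^ 2 - β * (v - u) - γ * v ^ 2 : ℝ) : EReal) +
          ((β * v + γ * v ^ 2 : ℝ) : EReal) := by
        rw [← EReal.coe_add, ← EReal.coe_add]; ring_nf
    _ < I x + ((β * v + γ * v ^ 2 : ℝ) : EReal) := EReal.add_lt_add_right_coe hI _

lemma coe_add_le_of_hasStrictSupportingLine (hc : -microEnt I H u = c)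
    (hsupp : HasStrictSupportingLine (gaussEnt I H γ) u β) (x : X) :
    (c : EReal) + ((β * u + γ * u ^ 2 : ℝ) : EReal) ≤
      I x + ((β * H x + γ * H x ^ 2 : ℝ) : EReal) := by
  by_cases hx : H x = u
  · rw [hx]
    exact add_le_add_left (hc ▸ hx ▸ neg_microEnt_le x) _
  · exact (lt_add_of_hasStrictSupportingLine hc hsupp hx).le

lemma add_eq_coe_add_iff_of_hasStrictSupportingLine (hc : -microEnt I H u = c)
    (hsupp : HasStrictSupportingLine (gaussEnt I H γ) u β) (x : X) :
    (I x : EReal) + ((β * H x + γ * H x ^ 2 : ℝ) : EReal) =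
        (c : EReal) + ((β * u + γ * u ^ 2 : ℝ) : EReal) ↔
      H x = u ∧ (I x : EReal) = c := by
  by_cases hx : H x = u
  · rw [hx, (EReal.addLECancellable_coe _).inj_left]
    simp
  · simpa [hx] using (lt_add_of_hasStrictSupportingLine hc hsupp hx).ne'

end

theorem stmt10_general {X : Type*} (I : X → ℝ≥0∞) (H : X → ℝ) (u β γ : ℝ)
    (hatt : ∃ x : X, H x = u ∧ (I x : EReal) = -(microEnt I H u))
    (hsupp : ∀ v : ℝ, v ≠ u →
      microEnt I H v - ((γ * v ^ 2 : ℝ) : EReal) <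
        microEnt I H u - ((γ * u ^ 2 : ℝ) : EReal) + ((β * (v - u) : ℝ) : EReal)) :
    {x : X | H x = u ∧ (I x : EReal) = -(microEnt I H u)} =
      {x : X | (I x : EReal) + ((β * H x + γ * (H x) ^ 2 : ℝ) : EReal) =
        ⨅ y : X, ((I y : EReal) + ((β * H y + γ * (H y) ^ 2 : ℝ) : EReal))} := by
  have hline : HasStrictSupportingLine (gaussEnt I H γ) u β := hsupp
  obtain ⟨x₀, hx₀u, hx₀I⟩ := hatt
  have hfin : microEnt I H u ≠ ⊥ := fun h => hline.ne_bot (by rw [gaussEnt, h, EReal.bot_sub])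
  obtain ⟨c, hc⟩ : ∃ c : ℝ, -microEnt I H u = c :=
    ⟨_, (EReal.coe_toReal (EReal.neg_eq_top_iff.not.2 hfin)
      (hx₀I ▸ EReal.coe_ennreal_ne_bot _)).symm⟩
  have hinf : ⨅ y : X, ((I y : EReal) + ((β * H y + γ * (H y) ^ 2 : ℝ) : EReal)) =
      (c : EReal) + ((β * u + γ * u ^ 2 : ℝ) : EReal) :=
    le_antisymm
      (iInf_le_of_le x₀
        ((add_eq_coe_add_iff_of_hasStrictSupportingLine hc hline x₀).2 ⟨hx₀u, hx₀I.trans hc⟩).le)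
      (le_iInf (coe_add_le_of_hasStrictSupportingLine hc hline))
  ext x
  rw [Set.mem_ofPred_eq, Set.mem_ofPred_eq, hinf, hc,
    add_eq_coe_add_iff_of_hasStrictSupportingLine hc hline]

/-- Full equivalence of the microcanonical and Gaussian ensembles: if `s(u) > -∞`,
the infimum defining `s(u)` is attained, and `s_γ(v) = s(v) - γv²` has a strictly
supporting line at `u` with slope `β`, then `E^u = E_{β,γ}`. -/
theorem stmt10 {X : Type*} (I : X → ℝ≥0∞) (H : X → ℝ) (u β γ : ℝ) (hγ : 0 ≤ γ)
    (hfin : microEnt I H u ≠ ⊥)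
    (hatt : ∃ x : X, H x = u ∧ (I x : EReal) = -(microEnt I H u))
    (hsupp : ∀ v : ℝ, v ≠ u →
      microEnt I H v - ((γ * v ^ 2 : ℝ) : EReal) <
        microEnt I H u - ((γ * u ^ 2 : ℝ) : EReal) + ((β * (v - u) : ℝ) : EReal)) :
    {x : X | H x = u ∧ (I x : EReal) = -(microEnt I H u)} =
      {x : X | (I x : EReal) + ((β * H x + γ * (H x) ^ 2 : ℝ) : EReal) =
        ⨅ y : X, ((I y : EReal) + ((β * H y + γ * (H y) ^ 2 : ℝ) : EReal))} :=
  stmt10_general I H u β γ hatt hsupp
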